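/- For every integer n ≥ 3, if E is a set of unordered pairs of Fin n such that Cl(T_E) contains every ordered triple (a,b,c) of pairwise distinct elements of Fin n with cyc(a,b,c), then |E| ≥ ⌈n/4⌉. (That is, every OT-graph for n points in convex position has at least ⌈n/4⌉ edges.) -/
import Mathlib


/-- Convex cyclic (counterclockwise) orientation on `Fin n`:
`cyc a b c` iff `a < b < c` or `b < c < a` or `c < a < b`. -/
def cyc {n : ℕ} (a b c : Fin n) : Prop :=
  (a.val < b.val ∧ b.val < c.val) ∨ (b.val < c.val ∧ c.val < a.val) ∨
    (c.val < a.val ∧ a.val < b.val)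

/-- The set `T_E` of ordered triples of pairwise distinct elements of `Fin n`
with counterclockwise orientation `cyc` such that at least one of the three
pairs is an edge of `E`. -/
def TE {n : ℕ} (E : Finset (Sym2 (Fin n))) : Set (Fin n × Fin n × Fin n) :=
  {t | t.1 ≠ t.2.1 ∧ t.2.1 ≠ t.2.2 ∧ t.1 ≠ t.2.2 ∧ cyc t.1 t.2.1 t.2.2 ∧
    (s(t.1, t.2.1) ∈ E ∨ s(t.2.1, t.2.2) ∈ E ∨ s(t.1, t.2.2) ∈ E)}

/-- The derivation closure `Cl T` of a set `T` of ordered triples: the smallest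
set of ordered triples containing `T` and closed under Knuth's rules
Ax1 (cyclic symmetry), Ax4 (interiority), Ax5 (transitivity) and
Ax5' (dual transitivity). -/
inductive Cl {α : Type*} (T : Set (α × α × α)) : α → α → α → Prop
  | base {p q r : α} : (p, q, r) ∈ T → Cl T p q r
  | ax1 {p q r : α} : Cl T p q r → Cl T q r p
  | ax4 {p q r t : α} : Cl T t q r → Cl T p t r → Cl T p q t → Cl T p q r
  | ax5 {p q r s t : α} : Cl T t s p → Cl T t s q → Cl T t s r →
      Cl T t p q → Cl T t q r → Cl T t p r
  | ax5' {p q r s t : α} : Cl T s t p → Cl T s t q → Cl T s t r →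
      Cl T t p q → Cl T t q r → Cl T t p r

lemma cyc_ax1 {n} {p q r : Fin n} (h : cyc p q r) : cyc q r p := by unfold cyc at *; omega
lemma cyc_ax4 {n} {p q r t : Fin n} (h1 : cyc t q r) (h2 : cyc p t r) (h3 : cyc p q t) :
    cyc p q r := by unfold cyc at *; omega
lemma cyc_ax5 {n} {p q r s t : Fin n} (h1 : cyc t s p) (h2 : cyc t s q) (h3 : cyc t s r)
    (h4 : cyc t p q) (h5 : cyc t q r) : cyc t p r := by unfold cyc at *; omega
lemma cyc_ax5' {n} {p q r s t : Fin n} (h1 : cyc s t p) (h2 : cyc s t q) (h3 : cyc s t r)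
    (h4 : cyc t p q) (h5 : cyc t q r) : cyc t p r := by unfold cyc at *; omega
lemma cyc_asym {n} {p q r : Fin n} (h : cyc p q r) : ¬ cyc q p r := by unfold cyc at *; omega
lemma cyc_total {n} {p q r : Fin n} (h1 : p ≠ q) (h2 : q ≠ r) (h3 : p ≠ r) :
    cyc p q r ∨ cyc q p r := by
  unfold cyc; rw [Fin.ne_iff_vne] at *; omega

lemma pres_nat (n iv jv av bv cv av' bv' cv' : ℕ)
    (hj : (iv + 1 < n ∧ jv = iv + 1) ∨ (iv + 1 = n ∧ jv = 0))
    (ha : av < n) (hb : bv < n) (hc : cv < n)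
    (hsa : (av = iv ∧ av' = jv) ∨ (av = jv ∧ av' = iv) ∨ (av ≠ iv ∧ av ≠ jv ∧ av' = av))
    (hsb : (bv = iv ∧ bv' = jv) ∨ (bv = jv ∧ bv' = iv) ∨ (bv ≠ iv ∧ bv ≠ jv ∧ bv' = bv))
    (hsc : (cv = iv ∧ cv' = jv) ∨ (cv = jv ∧ cv' = iv) ∨ (cv ≠ iv ∧ cv ≠ jv ∧ cv' = cv))
    (hone : ¬((av = iv ∨ bv = iv ∨ cv = iv) ∧ (av = jv ∨ bv = jv ∨ cv = jv)))
    (hcyc : (av < bv ∧ bv < cv) ∨ (bv < cv ∧ cv < av) ∨ (cv < av ∧ av < bv)) :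
    (av' < bv' ∧ bv' < cv') ∨ (bv' < cv' ∧ cv' < av') ∨ (cv' < av' ∧ av' < bv') := by
  omega

lemma swap_val' {n : ℕ} (i j x : Fin n) :
    (x.val = i.val ∧ ((Equiv.swap i j) x).val = j.val) ∨
    (x.val = j.val ∧ ((Equiv.swap i j) x).val = i.val) ∨
    (x.val ≠ i.val ∧ x.val ≠ j.val ∧ ((Equiv.swap i j) x).val = x.val) := by
  rcases eq_or_ne x i with h | h
  · left; subst h; simp
  rcases eq_or_ne x j with h2 | h2
  · right; left; subst h2; simp
  · right; right
    refine ⟨fun hv => h (Fin.ext hv), fun hv => h2 (Fin.ext hv), ?_⟩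
    rw [Equiv.swap_apply_of_ne_of_ne h h2]

lemma invariant {n : ℕ} (hn : 3 ≤ n) (E : Finset (Sym2 (Fin n))) (i j : Fin n)
    (hjv : (i.val + 1 < n ∧ j.val = i.val + 1) ∨ (i.val + 1 = n ∧ j.val = 0))
    (hi : ∀ e ∈ E, i ∉ e) (hj : ∀ e ∈ E, j ∉ e)
    {p q r : Fin n} (h : Cl (TE E) p q r) :
    cyc (Equiv.swap i j p) (Equiv.swap i j q) (Equiv.swap i j r) := by
  induction h with
  | @base a b c h =>
    simp only [TE, Set.mem_setOf_eq] at h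
    obtain ⟨h1, h2, h3, hcyc, hedge⟩ := h
    have hone : ¬((a.val = i.val ∨ b.val = i.val ∨ c.val = i.val) ∧
        (a.val = j.val ∨ b.val = j.val ∨ c.val = j.val)) := by
      have hiltn := i.isLt
      rcases hedge with he | he | he <;>
      · have hx1 := hi _ he
        have hx2 := hj _ he
        rw [Sym2.mem_iff] at hx1 hx2
        push_neg at hx1 hx2
        obtain ⟨ha1, ha2⟩ := hx1
        obtain ⟨hb1, hb2⟩ := hx2
        rw [Fin.ne_iff_vne] at ha1 ha2 hb1 hb2
        omega
    unfold cyc at hcyc ⊢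
    exact pres_nat n i.val j.val a.val b.val c.val _ _ _ hjv a.isLt b.isLt c.isLt
      (swap_val' i j a) (swap_val' i j b) (swap_val' i j c) hone hcyc
  | ax1 _ ih => exact cyc_ax1 ih
  | ax4 _ _ _ ih1 ih2 ih3 => exact cyc_ax4 ih1 ih2 ih3
  | ax5 _ _ _ _ _ ih1 ih2 ih3 ih4 ih5 => exact cyc_ax5 ih1 ih2 ih3 ih4 ih5
  | ax5' _ _ _ _ _ ih1 ih2 ih3 ih4 ih5 => exact cyc_ax5' ih1 ih2 ih3 ih4 ih5

/-- Every OT-graph for `n ≥ 3` points in convex position has at least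
`⌈n/4⌉ = (n + 3) / 4` edges. -/
theorem convex_OT_graph_lower_bound (n : ℕ) (hn : 3 ≤ n)
    (E : Finset (Sym2 (Fin n)))
    (hOT : ∀ a b c : Fin n, a ≠ b → b ≠ c → a ≠ c → cyc a b c →
      Cl (TE E) a b c) :
    (n + 3) / 4 ≤ E.card := by
  classical
  have hn0 : NeZero n := ⟨by omega⟩
  -- value of i + 1
  have hadd : ∀ i : Fin n, (i.val + 1 < n ∧ (i + 1).val = i.val + 1) ∨
      (i.val + 1 = n ∧ (i + 1).val = 0) := by
    intro i
    have h1 : (i + 1).val = (i.val + 1) % n := by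
      rw [Fin.add_def]
      simp [Fin.val_one', Nat.mod_eq_of_lt (show 1 < n by omega)]
    rcases Nat.lt_or_ge (i.val + 1) n with h | h
    · left; rw [h1, Nat.mod_eq_of_lt h]; exact ⟨h, rfl⟩
    · right
      have : i.val + 1 = n := by have := i.isLt; omega
      refine ⟨this, ?_⟩
      rw [h1, this, Nat.mod_self]
  set V : Finset (Fin n) := Finset.univ.filter (fun v => ∃ e ∈ E, v ∈ e) with hV
  set S : Finset (Fin n) := Finset.univ.filter (fun v => ¬ ∃ e ∈ E, v ∈ e) with hS
  -- key: no two cyclically consecutive isolated vertices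
  have key : ∀ i : Fin n, i ∈ V ∨ i + 1 ∈ V := by
    intro i
    by_contra hcon
    push_neg at hcon
    obtain ⟨hiV, hjV⟩ := hcon
    rw [hV, Finset.mem_filter] at hiV hjV
    push_neg at hiV hjV
    have hi' : ∀ e ∈ E, i ∉ e := fun e he => hiV (Finset.mem_univ i) e he
    have hj' : ∀ e ∈ E, (i + 1) ∉ e := fun e he => hjV (Finset.mem_univ _) e he
    have hij : i ≠ i + 1 := by
      rw [Fin.ne_iff_vne]
      rcases hadd i with ⟨h1, h2⟩ | ⟨h1, h2⟩ <;> omega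
    -- pick a third vertex
    have hx : ∃ x : Fin n, x ≠ i ∧ x ≠ i + 1 := by
      have hsub : ({i, i + 1} : Finset (Fin n)) ⊆ Finset.univ := Finset.subset_univ _
      have hcard : (Finset.univ \ ({i, i + 1} : Finset (Fin n))).card =
          n - ({i, i + 1} : Finset (Fin n)).card := by
        rw [Finset.card_sdiff_of_subset hsub, Finset.card_univ, Fintype.card_fin]
      have hle : ({i, i + 1} : Finset (Fin n)).card ≤ 2 := by
        apply le_trans (Finset.card_insert_le _ _); simp
      have : 0 < (Finset.univ \ ({i, i + 1} : Finset (Fin n))).card := by omega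
      obtain ⟨x, hxm⟩ := Finset.card_pos.mp this
      rw [Finset.mem_sdiff, Finset.mem_insert, Finset.mem_singleton] at hxm
      push_neg at hxm
      exact ⟨x, hxm.2.1, hxm.2.2⟩
    obtain ⟨x, hx1, hx2⟩ := hx
    have hsi : Equiv.swap i (i + 1) i = i + 1 := Equiv.swap_apply_left _ _
    have hsj : Equiv.swap i (i + 1) (i + 1) = i := Equiv.swap_apply_right _ _
    have hsx : Equiv.swap i (i + 1) x = x := Equiv.swap_apply_of_ne_of_ne hx1 hx2
    rcases cyc_total hij hx2.symm (Ne.symm hx1) with hc | hc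
    · have hcl := hOT i (i + 1) x hij hx2.symm (Ne.symm hx1) hc
      have := invariant hn E i (i + 1) (hadd i) hi' hj' hcl
      rw [hsi, hsj, hsx] at this
      exact cyc_asym this hc
    · have hcl := hOT (i + 1) i x (Ne.symm hij) (Ne.symm hx1) hx2.symm hc
      have := invariant hn E i (i + 1) (hadd i) hi' hj' hcl
      rw [hsi, hsj, hsx] at this
      exact cyc_asym this hc
  -- S has no two cyclically consecutive elements
  have hVS : ∀ v : Fin n, v ∈ S ↔ v ∉ V := by
    intro v; rw [hV, hS]; simp
  have noTwo : ∀ v ∈ S, v + 1 ∉ S := by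
    intro v hv hv1
    rcases key v with h | h
    · exact (hVS v).mp hv h
    · exact (hVS (v + 1)).mp hv1 h
  -- bound 2|S| ≤ n via disjoint pairs
  have hSbound : 2 * S.card ≤ n := by
    have hne : ∀ v : Fin n, v ≠ v + 1 := by
      intro v; rw [Fin.ne_iff_vne]
      rcases hadd v with ⟨h1, h2⟩ | ⟨h1, h2⟩ <;> omega
    have hdisj : ∀ u ∈ S, ∀ v ∈ S, u ≠ v →
        Disjoint ({u, u + 1} : Finset (Fin n)) {v, v + 1} := by
      intro u hu v hv huv
      have h1 : u ≠ v + 1 := fun h => noTwo v hv (h ▸ hu)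
      have h2 : u + 1 ≠ v := fun h => noTwo u hu (h ▸ hv)
      have h3 : u + 1 ≠ v + 1 := fun h => huv (add_right_cancel h)
      rw [Finset.disjoint_left]
      intro a ha hb
      rw [Finset.mem_insert, Finset.mem_singleton] at ha hb
      rcases ha with rfl | rfl <;> rcases hb with h | h <;> first
        | exact huv h | exact h1 h | exact h2 h | exact h3 h
    have hbU : (S.biUnion (fun v => ({v, v + 1} : Finset (Fin n)))).card = 2 * S.card := by
      rw [Finset.card_biUnion hdisj]
      rw [Finset.sum_congr rfl (fun v _ => Finset.card_pair (hne v))]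
      rw [Finset.sum_const, smul_eq_mul, Nat.mul_comm]
    have := Finset.card_le_card
      (Finset.subset_univ (S.biUnion (fun v => ({v, v + 1} : Finset (Fin n)))))
    rw [Finset.card_univ, Fintype.card_fin] at this
    omega
  -- bound |V| ≤ 2|E|
  have hVbound : V.card ≤ 2 * E.card := by
    have hsub : V ⊆ E.biUnion (fun e => Finset.univ.filter (· ∈ e)) := by
      intro v hv
      rw [hV, Finset.mem_filter] at hv
      obtain ⟨-, e, he, hve⟩ := hv
      exact Finset.mem_biUnion.mpr ⟨e, he, Finset.mem_filter.mpr ⟨Finset.mem_univ _, hve⟩⟩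
    calc V.card ≤ (E.biUnion (fun e => Finset.univ.filter (· ∈ e))).card :=
          Finset.card_le_card hsub
      _ ≤ ∑ e ∈ E, (Finset.univ.filter (· ∈ e)).card := Finset.card_biUnion_le
      _ ≤ ∑ _e ∈ E, 2 := by
          apply Finset.sum_le_sum
          intro e _
          induction e using Sym2.ind with
          | _ x y =>
            have : (Finset.univ.filter (· ∈ s(x, y))) ⊆ {x, y} := by
              intro a ha
              rw [Finset.mem_filter, Sym2.mem_iff] at ha
              rw [Finset.mem_insert, Finset.mem_singleton]
              exact ha.2
            calc (Finset.univ.filter (· ∈ s(x, y))).card ≤ ({x, y} : Finset (Fin n)).card :=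
                  Finset.card_le_card this
              _ ≤ 2 := by apply le_trans (Finset.card_insert_le _ _); simp
      _ = 2 * E.card := by rw [Finset.sum_const, smul_eq_mul, Nat.mul_comm]
  have hsum : V.card + S.card = n := by
    rw [hV, hS]
    rw [Finset.card_filter_add_card_filter_not]
    · rw [Finset.card_univ, Fintype.card_fin]
  omega
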